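/- Let π ≃ ⟪a₁,…,aₙ⟫ be an anisotropic quasi-Pfister form over F and let K/F be a field extension with K = F(α₁,…,αₙ) where αᵢᵖ equals the image of aᵢ in K for each i. Assume that φ ≃ π ⊗ φ′ and ψ ≃ π ⊗ ψ′ are anisotropic diagonal quasilinear p-forms over F (φ′, ψ′ over F) such that φ′_K and ψ′_K are similar over K. Then φ and ψ are similar over F. -/

import Mathlib

/-!
Diagonal quasilinear `p`-forms over a field `F` of characteristic `p`,
following Hoffmann and Zemková. A form of dimension `n` is recorded by its
coefficient tuple `a : ι → F` (for a finite index type `ι`), the form being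
`x ↦ ∑ i, a i * (x i)^p`.
-/

universe u

namespace QLF

open scoped BigOperators

/-- Evaluation of the diagonal quasilinear `p`-form with coefficients `a` at `x`. -/
def eval (p : ℕ) {F : Type*} [CommRing F] {ι : Type*} [Fintype ι]
    (a : ι → F) (x : ι → F) : F :=
  ∑ i, a i * x i ^ p

/-- A form is isotropic if it has a nontrivial zero. -/
def Isotropic (p : ℕ) {F : Type*} [CommRing F] {ι : Type*} [Fintype ι] (a : ι → F) : Prop :=
  ∃ x : ι → F, x ≠ 0 ∧ eval p a x = 0

/-- A form is anisotropic if it has no nontrivial zero. -/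
def Anisotropic (p : ℕ) {F : Type*} [CommRing F] {ι : Type*} [Fintype ι] (a : ι → F) : Prop :=
  ¬ Isotropic p a

/-- In characteristic `p`, the zero set of a diagonal quasilinear `p`-form is a
linear subspace. -/
def zeroSubmodule (p : ℕ) [Fact p.Prime] {F : Type*} [Field F] [CharP F p]
    {ι : Type*} [Fintype ι] (a : ι → F) : Submodule F (ι → F) where
  carrier := {x | eval p a x = 0}
  zero_mem' := by
    have hp : p ≠ 0 := (Fact.out : p.Prime).ne_zero
    simp [eval, zero_pow hp]
  add_mem' := by
    intro x y hx hy
    haveI : ExpChar F p := .prime Fact.out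
    have hxy : eval p a (x + y) = eval p a x + eval p a y := by
      simp only [eval, Pi.add_apply]
      rw [← Finset.sum_add_distrib]
      exact Finset.sum_congr rfl fun i _ => by rw [add_pow_char, mul_add]
    simp only [Set.mem_setOf_eq] at *
    rw [hxy, hx, hy, add_zero]
  smul_mem' := by
    intro c x hx
    simp only [Set.mem_setOf_eq] at *
    have hcx : eval p a (c • x) = c ^ p * eval p a x := by
      simp only [eval, Pi.smul_apply, smul_eq_mul, Finset.mul_sum]
      exact Finset.sum_congr rfl fun i _ => by rw [mul_pow]; ring
    rw [hcx, hx, mul_zero]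

/-- The defect `i₀` of a form: the dimension of its zero set. -/
noncomputable def defect (p : ℕ) [Fact p.Prime] {F : Type*} [Field F] [CharP F p]
    {ι : Type*} [Fintype ι] (a : ι → F) : ℕ :=
  Module.finrank F (zeroSubmodule p a)

/-- Isometry of forms: a linear bijection carrying one form into the other. -/
def Isometric (p : ℕ) {F : Type*} [Field F] {ι κ : Type*} [Fintype ι] [Fintype κ]
    (a : ι → F) (b : κ → F) : Prop :=
  ∃ T : (ι → F) ≃ₗ[F] (κ → F), ∀ x, eval p a x = eval p b (T x)

/-- `a` is a subform of `b`. -/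
def Subform (p : ℕ) {F : Type*} [Field F] {ι κ : Type*} [Fintype ι] [Fintype κ]
    (a : ι → F) (b : κ → F) : Prop :=
  ∃ T : (ι → F) →ₗ[F] (κ → F), Function.Injective T ∧ ∀ x, eval p a x = eval p b (T x)

/-- Similarity of forms: `a ≃ c·b` for some scalar `c ≠ 0`. -/
def Similar (p : ℕ) {F : Type*} [Field F] {ι κ : Type*} [Fintype ι] [Fintype κ]
    (a : ι → F) (b : κ → F) : Prop :=
  ∃ c : F, c ≠ 0 ∧ Isometric p a (fun i => c * b i)

/-- Vishik equivalence: same dimension, and equal defects over every field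
extension `E/F`. -/
def VishikEquiv (p : ℕ) [Fact p.Prime] {F : Type u} [Field F] [CharP F p]
    {ι κ : Type*} [Fintype ι] [Fintype κ] (a : ι → F) (b : κ → F) : Prop :=
  Fintype.card ι = Fintype.card κ ∧
    ∀ (E : Type u) [Field E] [CharP E p] (f : F →+* E),
      defect p (f ∘ a) = defect p (f ∘ b)

/-- Weak Vishik equivalence: same dimension, and equal defects over every field
extension of the shape `E = F(α)` with `αᵖ ∈ F` (this includes `E = F`). -/
def WeakVishikEquiv (p : ℕ) [Fact p.Prime] {F : Type u} [Field F] [CharP F p]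
    {ι κ : Type*} [Fintype ι] [Fintype κ] (a : ι → F) (b : κ → F) : Prop :=
  Fintype.card ι = Fintype.card κ ∧
    ∀ (E : Type u) [Field E] [CharP E p] (f : F →+* E) (α : E),
      α ^ p ∈ Set.range ⇑f →
      Subfield.closure (insert α (Set.range ⇑f)) = ⊤ →
      defect p (f ∘ a) = defect p (f ∘ b)

/-- The set `Fᵖ` of `p`-th powers. -/
def pSet (p : ℕ) (F : Type*) [Field F] : Set F := Set.range fun x : F => x ^ p

/-- The subfield `Fᵖ` of `p`-th powers (in characteristic `p` the set of `p`-th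
powers is already a subfield, so the closure adds nothing). -/
def pthSubfield (p : ℕ) (F : Type*) [Field F] : Subfield F :=
  Subfield.closure (pSet p F)

/-- The subfield `Fᵖ(s)` generated by a set `s` over `Fᵖ`. -/
def adjoin (p : ℕ) {F : Type*} [Field F] (s : Set F) : Subfield F :=
  Subfield.closure (pSet p F ∪ s)

/-- The degree `[N : k]` of a subfield `N` over a subfield `k` (for `k ≤ N`,
the `k`-span of `N` in `F` is `N` itself, so this is the `k`-dimension of `N`). -/
noncomputable def degOver {F : Type*} [Field F] (k : Subfield F) (N : Subfield F) : ℕ :=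
  Module.finrank k (Submodule.span k (N : Set F))

/-- The set `D_F(φ)` of values of the form. -/
def values (p : ℕ) {F : Type*} [CommRing F] {ι : Type*} [Fintype ι] (a : ι → F) : Set F :=
  Set.range (eval p a)

/-- The norm field `N_F(φ)`: the subfield generated over `Fᵖ` by all quotients
of nonzero values of `φ`. -/
def normField (p : ℕ) {F : Type*} [Field F] {ι : Type*} [Fintype ι] (a : ι → F) : Subfield F :=
  adjoin p {z : F | ∃ u ∈ values p a, ∃ v ∈ values p a, u ≠ 0 ∧ v ≠ 0 ∧ z = u / v}

/-- The norm degree `ndeg_F(φ) = [N_F(φ) : Fᵖ]`. -/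
noncomputable def ndeg (p : ℕ) {F : Type*} [Field F] {ι : Type*} [Fintype ι] (a : ι → F) : ℕ :=
  degOver (pthSubfield p F) (normField p a)

/-- An anisotropic form is minimal if `ndeg_F(φ) = p^(dim φ - 1)`. -/
def Minimal (p : ℕ) {F : Type*} [Field F] {ι : Type*} [Fintype ι] (a : ι → F) : Prop :=
  Anisotropic p a ∧ ndeg p a = p ^ (Fintype.card ι - 1)

/-- The quasi-Pfister form `⟪b₁,…,bₙ⟫`: its coefficients are all products
`b₁^{e₁}⋯bₙ^{eₙ}` with `0 ≤ eᵢ ≤ p-1`. -/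
def pfister (p : ℕ) {F : Type*} [CommRing F] {n : ℕ} (b : Fin n → F) :
    (Fin n → Fin p) → F :=
  fun e => ∏ i, b i ^ (e i : ℕ)

/-- A form is a quasi-Pfister form if it is isometric to some `⟪b₁,…,bₙ⟫`
with all `bᵢ ∈ F×`. -/
def IsQuasiPfister (p : ℕ) {F : Type*} [Field F] {ι : Type*} [Fintype ι] (a : ι → F) : Prop :=
  ∃ (n : ℕ) (b : Fin n → F), (∀ i, b i ≠ 0) ∧ Isometric p a (pfister p b)

/-- `a` is a quasi-Pfister neighbor of the form `π`: `c·a ⊆ π` for some `c ≠ 0`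
and `p · dim a > dim π`. -/
def IsNeighborOf (p : ℕ) {F : Type*} [Field F] {ι κ : Type*} [Fintype ι] [Fintype κ]
    (a : ι → F) (π : κ → F) : Prop :=
  ∃ c : F, c ≠ 0 ∧ Subform p (fun i => c * a i) π ∧ p * Fintype.card ι > Fintype.card κ

/-- `a` is a quasi-Pfister neighbor (of some quasi-Pfister form). -/
def IsQPNeighbor (p : ℕ) {F : Type*} [Field F] {ι : Type*} [Fintype ι] (a : ι → F) : Prop :=
  ∃ (n : ℕ) (b : Fin n → F), (∀ i, b i ≠ 0) ∧ IsNeighborOf p a (pfister p b)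

/-- `a` is a quasi-Pfister neighbor of codimension one of some anisotropic
quasi-Pfister form: `dim π - dim a = 1`. -/
def IsQPNeighborCodimOne (p : ℕ) {F : Type*} [Field F] {ι : Type*} [Fintype ι]
    (a : ι → F) : Prop :=
  ∃ (n : ℕ) (b : Fin n → F), (∀ i, b i ≠ 0) ∧ Anisotropic p (pfister p b) ∧
    IsNeighborOf p a (pfister p b) ∧ Fintype.card ι + 1 = p ^ n

/-- Tensor product of diagonal forms: coefficients `aᵢ · bⱼ`. -/
def tensor (p : ℕ) {F : Type*} [CommRing F] {ι κ : Type*}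
    (a : ι → F) (b : κ → F) : ι × κ → F :=
  fun ik => a ik.1 * b ik.2

/-- The set `G_F(φ) = {x ∈ F× : xφ ≃ φ} ∪ {0}` of similarity factors. -/
def simFactors (p : ℕ) {F : Type*} [Field F] {ι : Type*} [Fintype ι] (a : ι → F) : Set F :=
  {x | x ≠ 0 ∧ Isometric p (fun i => x * a i) a} ∪ {0}

/-- `b` is the anisotropic part of `a`: `b` is anisotropic and
`a ≃ b ⊥ (m × ⟨0⟩)` for some `m`. -/
def IsAnisotropicPart (p : ℕ) {F : Type*} [Field F] {ι κ : Type*} [Fintype ι] [Fintype κ]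
    (a : ι → F) (b : κ → F) : Prop :=
  Anisotropic p b ∧ ∃ m : ℕ, Isometric p a (Sum.elim b fun _ : Fin m => (0 : F))

/-- `⟪c₁,…,cₘ⟫` is (a representative of) the norm form of `a`:
`N_F(a) = Fᵖ(c₁,…,cₘ)` and `ndeg_F(a) = pᵐ`. -/
def IsNormForm (p : ℕ) {F : Type*} [Field F] {ι : Type*} [Fintype ι] (a : ι → F)
    {m : ℕ} (c : Fin m → F) : Prop :=
  normField p a = adjoin p (Set.range c) ∧ ndeg p a = p ^ m

end QLF

/-!
The value set `D_F(π)` of the quasi-Pfister form `π = ⟪a₁,…,aₙ⟫` is the subfield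
`Fᵖ(a₁,…,aₙ)` of `F`, and its image in `K = F(α₁,…,αₙ)` is exactly `Kᵖ`. Since
`D_F(π ⊗ φ′) = {∑ lⱼ bⱼ : lⱼ ∈ D_F(π)}`, the embedding `F → K` carries `D_F(φ)` onto
`D_K(φ′_K)`, and likewise for `ψ`. A similarity `φ′_K ≃ c ψ′_K` thus gives
`f(D_F(φ)) = c · f(D_F(ψ))`, which forces `c ∈ f(F)`, so `D_F(φ) = d · D_F(ψ)` for some
`d ∈ F×`. Anisotropic quasilinear forms are determined up to isometry by their value sets,
because their evaluation maps are injective and additive, hence `φ ≃ dψ`.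
-/

namespace QLF

open Function

section CommRing

variable {p : ℕ} {R : Type*} [CommRing R] {ι κ : Type*} [Fintype ι] [Fintype κ]

theorem eval_smul (a : ι → R) (c : R) (x : ι → R) : eval p a (c • x) = c ^ p * eval p a x := by
  simp only [eval, Pi.smul_apply, smul_eq_mul, Finset.mul_sum, mul_pow]
  exact Finset.sum_congr rfl fun i _ => by ring

theorem pow_mul_mem_values {a : ι → R} (c : R) {v : R} (hv : v ∈ values p a) :
    c ^ p * v ∈ values p a := by
  obtain ⟨x, rfl⟩ := hv
  exact ⟨c • x, eval_smul a c x⟩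

theorem eval_const_mul (c : R) (a x : ι → R) :
    eval p (fun i => c * a i) x = c * eval p a x := by
  simp only [eval, Finset.mul_sum, mul_assoc]

theorem values_const_mul (c : R) (a : ι → R) :
    values p (fun i => c * a i) = (c * ·) '' values p a := by
  rw [values, values, ← Set.range_comp]
  exact congrArg Set.range (funext (eval_const_mul c a))

theorem Anisotropic.const_mul [NoZeroDivisors R] {a : ι → R} (ha : Anisotropic p a) {c : R}
    (hc : c ≠ 0) : Anisotropic p (fun i => c * a i) := by
  rintro ⟨x, hx, hx0⟩
  rw [eval_const_mul] at hx0
  exact ha ⟨x, hx, (mul_eq_zero.mp hx0).resolve_left hc⟩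

theorem eval_tensor (a : ι → R) (b : κ → R) (x : ι × κ → R) :
    eval p (tensor p a b) x = ∑ j, eval p a (fun i => x (i, j)) * b j := by
  simp only [eval, tensor, Fintype.sum_prod_type, Finset.sum_mul]
  rw [Finset.sum_comm]
  exact Finset.sum_congr rfl fun j _ => Finset.sum_congr rfl fun i _ => by ring

theorem values_tensor (a : ι → R) (b : κ → R) :
    values p (tensor p a b) = {v | ∃ l : κ → R, (∀ j, l j ∈ values p a) ∧ ∑ j, l j * b j = v} := by
  ext v
  constructor
  · rintro ⟨x, rfl⟩
    exact ⟨fun j => eval p a (fun i => x (i, j)), fun j => ⟨_, rfl⟩, (eval_tensor a b x).symm⟩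
  · rintro ⟨l, hl, rfl⟩
    choose y hy using hl
    exact ⟨fun ij => y ij.2 ij.1, by simp only [eval_tensor, hy]⟩

theorem image_values_tensor {S : Type*} [CommRing S] (f : R →+* S) {a : ι → R} (b : κ → R)
    (ha : f '' values p a = Set.range (· ^ p : S → S)) :
    f '' values p (tensor p a b) = values p (f ∘ b) := by
  rw [values_tensor]
  ext v
  constructor
  · rintro ⟨_, ⟨l, hl, rfl⟩, rfl⟩
    have hroot (j : κ) : f (l j) ∈ Set.range (· ^ p : S → S) := ha ▸ Set.mem_image_of_mem f (hl j)
    choose μ hμ using hroot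
    exact ⟨μ, by simp only [eval, comp_apply, map_sum, map_mul, hμ, mul_comm]⟩
  · rintro ⟨μ, rfl⟩
    have hpow (j : κ) : μ j ^ p ∈ f '' values p a := ha ▸ Set.mem_range_self (μ j)
    choose l hl hlμ using hpow
    exact ⟨_, ⟨l, hl, rfl⟩, by simp only [eval, comp_apply, map_sum, map_mul, hlμ, mul_comm]⟩

end CommRing

section Pfister

variable {p : ℕ} {R : Type*} [CommRing R] {n : ℕ}

theorem pfister_mul_pfister (a : Fin n → R) (e e' : Fin n → Fin p) :
    pfister p a e * pfister p a e' =
      (∏ i, a i ^ ((e i + e' i : ℕ) / p)) ^ p * pfister p a (e + e') := by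
  simp only [pfister, ← Finset.prod_pow, ← Finset.prod_mul_distrib, ← pow_mul, ← pow_add,
    Pi.add_apply, Fin.val_add]
  refine Finset.prod_congr rfl fun i _ => ?_
  rw [mul_comm _ p, Nat.div_add_mod]

theorem pfister_single [Fact p.Prime] (a : Fin n → R) (i : Fin n) :
    pfister p a (Pi.single i 1) = a i := by
  have hp : 1 < p := (Fact.out : p.Prime).one_lt
  simp [pfister, Pi.single_apply, apply_ite, Nat.mod_eq_of_lt hp]

theorem coeff_mem_values {ι : Type*} [Fintype ι] [DecidableEq ι] [NeZero p] (a : ι → R)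
    (i : ι) : a i ∈ values p a :=
  ⟨Pi.single i 1, by simp [eval, Pi.single_apply, zero_pow (NeZero.ne p)]⟩

theorem map_pfister {S : Type*} [CommRing S] (f : R →+* S) {a : Fin n → R} {α : Fin n → S}
    (hα : ∀ i, α i ^ p = f (a i)) (e : Fin n → Fin p) :
    f (pfister p a e) = (∏ i, α i ^ (e i : ℕ)) ^ p := by
  simp only [pfister, map_prod, map_pow, ← hα, ← Finset.prod_pow, ← pow_mul, mul_comm p]

end Pfister

section CharP

variable {p : ℕ} [Fact p.Prime] {R : Type*} [CommRing R] [CharP R p] {ι : Type*} [Fintype ι]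

theorem eval_add (a x y : ι → R) : eval p a (x + y) = eval p a x + eval p a y := by
  simp only [eval, Pi.add_apply, add_pow_char, mul_add, Finset.sum_add_distrib]

variable (p) in
def evalAddHom (a : ι → R) : (ι → R) →+ R := AddMonoidHom.mk' (eval p a) (eval_add a)

theorem Anisotropic.eval_injective {a : ι → R} (ha : Anisotropic p a) : Injective (eval p a) :=
  (injective_iff_map_eq_zero (evalAddHom p a)).2 fun x hx => by_contra fun h => ha ⟨x, h, hx⟩

theorem mul_mem_values_pfister {n : ℕ} {a : Fin n → R} {u v : R}
    (hu : u ∈ values p (pfister p a)) (hv : v ∈ values p (pfister p a)) :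
    u * v ∈ values p (pfister p a) := by
  obtain ⟨y, rfl⟩ := hu
  obtain ⟨z, rfl⟩ := hv
  show _ ∈ (evalAddHom p (pfister p a)).range
  simp only [eval, Finset.sum_mul_sum]
  refine sum_mem fun e _ => sum_mem fun e' _ => ?_
  have hterm : pfister p a e * y e ^ p * (pfister p a e' * z e' ^ p) =
      (y e * z e' * ∏ i, a i ^ ((e i + e' i : ℕ) / p)) ^ p * pfister p a (e + e') := by
    rw [mul_pow, mul_pow, mul_assoc _ _ (pfister p a _), ← pfister_mul_pfister]
    ring
  rw [hterm]
  exact pow_mul_mem_values _ (coeff_mem_values _ _)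

variable (p) in
def pfisterValuesSubring {n : ℕ} (a : Fin n → R) : Subring R :=
  { (evalAddHom p (pfister p a)).range with
    mul_mem' := mul_mem_values_pfister
    one_mem' := by
      have h := coeff_mem_values (p := p) (pfister p a) 0
      simp only [pfister, Pi.zero_apply, Fin.val_zero, pow_zero, Finset.prod_const_one] at h
      exact h }

variable (p) in
def pfisterValuesSubfield {F : Type*} [Field F] [CharP F p] {n : ℕ} (a : Fin n → F) : Subfield F :=
  { pfisterValuesSubring p a with
    inv_mem' := fun v hv => by
      have hinv : v⁻¹ = v⁻¹ ^ p * v ^ (p - 1) := by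
        obtain ⟨k, hk⟩ : ∃ k, p = k + 1 := Nat.exists_eq_add_one.2 (Fact.out : p.Prime).pos
        rcases eq_or_ne v 0 with rfl | hv0
        · simp [hk]
        · rw [hk, Nat.add_sub_cancel, pow_succ', mul_assoc, ← mul_pow, inv_mul_cancel₀ hv0,
            one_pow, mul_one]
      rw [hinv]
      exact pow_mul_mem_values _ ((pfisterValuesSubring p a).pow_mem hv _) }

end CharP

section Field

variable {p : ℕ} {F : Type*} [Field F] {ι κ : Type*} [Fintype ι] [Fintype κ]

theorem Isometric.values_eq {a : ι → F} {b : κ → F} (h : Isometric p a b) :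
    values p a = values p b := by
  obtain ⟨T, hT⟩ := h
  rw [values, funext hT]
  exact T.surjective.range_comp (eval p b)

theorem Anisotropic.isometric_of_values_eq [Fact p.Prime] [CharP F p] {a : ι → F} {b : κ → F}
    (ha : Anisotropic p a) (hb : Anisotropic p b) (h : values p a = values p b) :
    Isometric p a b := by
  have hab (x : ι → F) : eval p a x ∈ values p b := h ▸ ⟨x, rfl⟩
  have hba (y : κ → F) : eval p b y ∈ values p a := h ▸ ⟨y, rfl⟩
  choose T hT using hab
  choose S hS using hba
  refine ⟨{ toFun := T
            map_add' := fun x y => hb.eval_injective (by rw [eval_add, hT, hT, hT, eval_add])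
            map_smul' := fun c x => hb.eval_injective (by
              rw [RingHom.id_apply, eval_smul, hT, hT, eval_smul])
            invFun := S
            left_inv := fun x => ha.eval_injective (by rw [hS, hT])
            right_inv := fun y => hb.eval_injective (by rw [hT, hS]) }, fun x => (hT x).symm⟩

theorem image_values_pfister [Fact p.Prime] [CharP F p] {K : Type*} [Field K] [CharP K p]
    (f : F →+* K) {n : ℕ} (a : Fin n → F) {α : Fin n → K} (hα : ∀ i, α i ^ p = f (a i))
    (hgen : Subfield.closure (Set.range f ∪ Set.range α) = ⊤) :
    f '' values p (pfister p a) = Set.range (· ^ p : K → K) := by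
  apply subset_antisymm
  · rintro _ ⟨_, ⟨y, rfl⟩, rfl⟩
    refine ⟨∑ e, f (y e) * ∏ i, α i ^ (e i : ℕ), ?_⟩
    simp only [sum_pow_char, mul_pow, eval, map_sum, map_mul, map_pow, map_pfister f hα, mul_comm]
  · have hle : Subfield.closure (Set.range f ∪ Set.range α) ≤
        ((pfisterValuesSubfield p a).map f).comap (frobenius K p) := by
      rw [Subfield.closure_le]
      rintro _ (⟨c, rfl⟩ | ⟨i, rfl⟩)
      · have hc : c ^ p ∈ pfisterValuesSubfield p a :=
          mul_one (c ^ p) ▸ pow_mul_mem_values c (pfisterValuesSubfield p a).one_mem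
        exact ⟨c ^ p, hc, by rw [frobenius_def, map_pow]⟩
      · have ha : a i ∈ pfisterValuesSubfield p a :=
          pfister_single (p := p) a i ▸ coeff_mem_values (pfister p a) (Pi.single i 1)
        exact ⟨a i, ha, by rw [frobenius_def, hα]⟩
    rintro _ ⟨x, rfl⟩
    obtain ⟨v, hv, hfv⟩ := Subfield.mem_map.1 (hle (hgen ▸ Subfield.mem_top x))
    exact ⟨v, hv, hfv⟩

theorem exists_eq_image_const_mul_of_image_eq {K : Type*} [Field K] (f : F →+* K) {S T : Set F}
    {c : K} (hc : c ≠ 0) (h : f '' S = (c * ·) '' (f '' T)) :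
    ∃ d : F, d ≠ 0 ∧ S = (d * ·) '' T := by
  by_cases hT : ∃ w ∈ T, w ≠ 0
  · obtain ⟨w, hw, hw0⟩ := hT
    obtain ⟨u, -, hu⟩ : c * f w ∈ f '' S :=
      h ▸ Set.mem_image_of_mem _ (Set.mem_image_of_mem f hw)
    have hd : f (u / w) = c := by
      rw [map_div₀, hu, mul_div_cancel_right₀ _ ((map_ne_zero f).2 hw0)]
    refine ⟨u / w, fun h0 => hc (by rw [← hd, h0, map_zero]), Set.image_injective.2 f.injective ?_⟩
    rw [h, Set.image_image, Set.image_image]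
    simp only [map_mul, hd]
  · push Not at hT
    refine ⟨1, one_ne_zero, Set.image_injective.2 f.injective ?_⟩
    rw [h, Set.image_image, Set.image_image]
    exact Set.image_congr fun x hx => by simp [hT x hx]

end Field

end QLF

theorem stmt_11_general (p : ℕ) [Fact p.Prime] {F : Type u} [Field F] [CharP F p]
    {n : ℕ} (ac : Fin n → F)
    (K : Type u) [Field K] [CharP K p] (f : F →+* K)
    (α : Fin n → K) (hα : ∀ i, α i ^ p = f (ac i))
    (hgen : Subfield.closure (Set.range ⇑f ∪ Set.range α) = ⊤)
    {N M uu vv : ℕ} (φ : Fin N → F) (ψ : Fin M → F) (φ' : Fin uu → F) (ψ' : Fin vv → F)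
    (hφ : QLF.Isometric p φ (QLF.tensor p (QLF.pfister p ac) φ'))
    (hψ : QLF.Isometric p ψ (QLF.tensor p (QLF.pfister p ac) ψ'))
    (hφan : QLF.Anisotropic p φ) (hψan : QLF.Anisotropic p ψ)
    (hsim : QLF.Similar p (f ∘ φ') (f ∘ ψ')) :
    QLF.Similar p φ ψ := by
  obtain ⟨c, hc, hiso⟩ := hsim
  have hπ := QLF.image_values_pfister f ac hα hgen
  have hval : f '' QLF.values p φ = (c * ·) '' (f '' QLF.values p ψ) := by
    rw [hφ.values_eq, hψ.values_eq, QLF.image_values_tensor f φ' hπ,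
      QLF.image_values_tensor f ψ' hπ, hiso.values_eq, QLF.values_const_mul]
  obtain ⟨d, hd, hφψ⟩ := QLF.exists_eq_image_const_mul_of_image_eq f hc hval
  exact ⟨d, hd, hφan.isometric_of_values_eq (hψan.const_mul hd)
    (by rw [QLF.values_const_mul, hφψ])⟩

/-- Let `π ≃ ⟪a₁,…,aₙ⟫` be an anisotropic quasi-Pfister form over `F`
and `K = F(α₁,…,αₙ)` with `αᵢᵖ = aᵢ`. If `φ ≃ π ⊗ φ′` and `ψ ≃ π ⊗ ψ′` are anisotropic
over `F` and `φ′_K`, `ψ′_K` are similar over `K`, then `φ` and `ψ` are similar over `F`. -/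
theorem stmt_11 (p : ℕ) [Fact p.Prime] {F : Type u} [Field F] [CharP F p]
    {n : ℕ} (ac : Fin n → F) (hac : ∀ i, ac i ≠ 0)
    (hπan : QLF.Anisotropic p (QLF.pfister p ac))
    (K : Type u) [Field K] [CharP K p] (f : F →+* K)
    (α : Fin n → K) (hα : ∀ i, α i ^ p = f (ac i))
    (hgen : Subfield.closure (Set.range ⇑f ∪ Set.range α) = ⊤)
    {N M uu vv : ℕ} (φ : Fin N → F) (ψ : Fin M → F) (φ' : Fin uu → F) (ψ' : Fin vv → F)
    (hφ : QLF.Isometric p φ (QLF.tensor p (QLF.pfister p ac) φ'))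
    (hψ : QLF.Isometric p ψ (QLF.tensor p (QLF.pfister p ac) ψ'))
    (hφan : QLF.Anisotropic p φ) (hψan : QLF.Anisotropic p ψ)
    (hsim : QLF.Similar p (f ∘ φ') (f ∘ ψ')) :
    QLF.Similar p φ ψ :=
  stmt_11_general p ac K f α hα hgen φ ψ φ' ψ' hφ hψ hφan hψan hsim
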